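/- Let μ be a homogeneous S-valued measure on 𝔹, let j ∈ 𝔹 be proper, and let d = μ(1∖j). Then the restriction μ↾j to the relative Boolean algebra 𝔹↾j = {x∧j : x ∈ 𝔹} is homogeneous, and its trinary spectrum equals {(a,b,c) : a+b+c = μ(j), (a,b,c+d) ∈ Σ(μ), and (a+b,c,d) ∈ Σ(μ)}. -/

import Mathlib

variable {B : Type*} [BooleanAlgebra B] {S : Type*} [AddCommMonoid S]

/-- An `S`-valued finitely additive measure on the Boolean algebra `B`. -/
def IsBAMeasure (μ : B → S) : Prop :=
  μ ⊥ = 0 ∧ ∀ a b : B, Disjoint a b → μ (a ⊔ b) = μ a + μ b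

/-- An element is proper if it differs from `⊥` and `⊤`. -/
def IsProperElem (a : B) : Prop := a ≠ ⊥ ∧ a ≠ ⊤

/-- `{a, b, c}` is a partition of `B` into three nonzero pairwise disjoint pieces. -/
def IsPartition3 (a b c : B) : Prop :=
  a ≠ ⊥ ∧ b ≠ ⊥ ∧ c ≠ ⊥ ∧ Disjoint a b ∧ Disjoint a c ∧ Disjoint b c ∧ a ⊔ b ⊔ c = ⊤

/-- A Boolean automorphism `φ` preserves the measure `μ`. -/
def PreservesMeas (μ : B → S) (φ : B ≃o B) : Prop := ∀ x : B, μ (φ x) = μ x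

/-- `μ` is homogeneous: every partial `μ`-isomorphism on a 4-element subalgebra
(equivalently, determined by proper `a ↦ b` with `μ a = μ b`, `μ aᶜ = μ bᶜ`)
extends to a `μ`-automorphism. -/
def MeasHomogeneous (μ : B → S) : Prop :=
  ∀ a b : B, IsProperElem a → IsProperElem b → μ a = μ b → μ aᶜ = μ bᶜ →
    ∃ φ : B ≃o B, PreservesMeas μ φ ∧ φ a = b

/-- The 4 elements property (4EP). -/
def MeasHas4EP (μ : B → S) : Prop :=
  ∀ a b c d : B, IsPartition3 a b c → μ a + μ b = μ d → μ c = μ dᶜ →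
    ∃ p q : B, IsProperElem p ∧ IsProperElem q ∧ Disjoint p q ∧
      μ p = μ a ∧ μ q = μ b ∧ p ⊔ q = d

/-- The trinary spectrum of a measure. -/
def TrinarySpectrum (μ : B → S) : Set (S × S × S) :=
  {t | ∃ a b c : B, IsPartition3 a b c ∧ t = (μ a, μ b, μ c)}

/-- A partition of the relative algebra `B ↾ j` into three nonzero disjoint pieces. -/
def IsPartition3On (j a b c : B) : Prop :=
  a ≠ ⊥ ∧ b ≠ ⊥ ∧ c ≠ ⊥ ∧ Disjoint a b ∧ Disjoint a c ∧ Disjoint b c ∧ a ⊔ b ⊔ c = j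

/-- The trinary spectrum of the restriction `μ ↾ j`. -/
def TrinarySpectrumOn (μ : B → S) (j : B) : Set (S × S × S) :=
  {t | ∃ a b c : B, IsPartition3On j a b c ∧ t = (μ a, μ b, μ c)}

/-- Homogeneity of the restriction `μ ↾ j` (automorphisms of the relative
algebra `B ↾ j` are identified with automorphisms of `B` fixing `j`). -/
def MeasHomogeneousOn (μ : B → S) (j : B) : Prop :=
  ∀ a b : B, a ≤ j → b ≤ j → a ≠ ⊥ → a ≠ j → b ≠ ⊥ → b ≠ j →
    μ a = μ b → μ (j \ a) = μ (j \ b) →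
    ∃ φ : B ≃o B, (∀ x : B, x ≤ j → μ (φ x) = μ x) ∧ φ j = j ∧ φ a = b

/-!
For `a, b < j` matched by `μ`, each of the pairs `a ↦ b`, `j \ a ↦ j \ b`, `jᶜ ↦ jᶜ` is realised by
a `μ`-automorphism (by homogeneity of `μ`, resp. the identity), and `μ`-automorphisms glue along
matched finite partitions of `⊤`; so `μ ↾ j` is homogeneous without any back-and-forth argument.

For the spectrum, a partition `x, y, z` of `j` gives the partitions `x, y, z ⊔ jᶜ` and
`x ⊔ y, z, jᶜ` of `⊤`. Conversely, given partitions `x, y, z` and `u, v, w` of `⊤` of measures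
`(a, b, c + μ jᶜ)` and `(a + b, c, μ jᶜ)`, homogeneity moves `w` onto `jᶜ`, which splits `j` into
pieces `p, q` of measures `a + b, c`; moving `x ⊔ y` onto `p` then splits `p` as well.
-/

open Function

theorem IsBAMeasure.map_finset_sup {μ : B → S} (hμ : IsBAMeasure μ) {ι : Type*} (s : Finset ι)
    {f : ι → B} (hf : (s : Set ι).PairwiseDisjoint f) : μ (s.sup f) = ∑ i ∈ s, μ (f i) := by
  classical
  induction s using Finset.induction_on with
  | empty => exact hμ.1
  | insert i s hi ih =>
    rw [Finset.coe_insert, Set.pairwiseDisjoint_insert_of_notMem hi] at hf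
    rw [Finset.sup_insert, Finset.sum_insert hi, hμ.2 _ _ (Finset.disjoint_sup_right.2 hf.2),
      ih hf.1]

theorem IsBAMeasure.map_compl_of_le {μ : B → S} (hμ : IsBAMeasure μ) {a j : B} (h : a ≤ j) :
    μ aᶜ = μ (j \ a) + μ jᶜ := by
  have hsplit : aᶜ = j \ a ⊔ jᶜ := by
    rw [sdiff_eq, sup_inf_right, sup_compl_eq_top, top_inf_eq, sup_eq_left.2 (compl_le_compl h)]
  rw [hsplit, hμ.2 _ _ (disjoint_compl_right.mono_left sdiff_le)]

section Glue

variable {ι : Type*} [Fintype ι] {a b : ι → B} {φ : ι → B ≃o B}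

def glueFun (φ : ι → B ≃o B) (a : ι → B) (x : B) : B :=
  Finset.univ.sup fun i => φ i (x ⊓ a i)

theorem glueFun_monotone : Monotone (glueFun φ a) := fun _ _ hxy =>
  Finset.sup_mono_fun fun i _ => (φ i).monotone (inf_le_inf_right _ hxy)

theorem glueFun_eq_of_le (ha : Pairwise (Disjoint on a)) {i : ι} {x : B} (hx : x ≤ a i) :
    glueFun φ a x = φ i x := by
  refine le_antisymm (Finset.sup_le fun k _ => ?_)
    (Finset.le_sup_of_le (Finset.mem_univ i) (by rw [inf_eq_left.2 hx]))
  rcases eq_or_ne k i with rfl | hki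
  · exact (φ k).monotone inf_le_left
  · rw [disjoint_iff.1 ((ha hki).symm.mono_left hx), map_bot]
    exact bot_le

theorem glueFun_inf (hb : Pairwise (Disjoint on b)) (hφ : ∀ i, φ i (a i) = b i) (x : B) (i : ι) :
    glueFun φ a x ⊓ b i = φ i (x ⊓ a i) := by
  have hle : ∀ k, φ k (x ⊓ a k) ≤ b k := fun k => hφ k ▸ (φ k).monotone inf_le_right
  refine le_antisymm ?_ (le_inf (Finset.le_sup (f := fun k => φ k (x ⊓ a k))
    (Finset.mem_univ i)) (hle i))
  rw [glueFun, Finset.sup_inf_distrib_right]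
  refine Finset.sup_le fun k _ => ?_
  rcases eq_or_ne k i with rfl | hki
  · exact inf_le_left
  · rw [disjoint_iff.1 ((hb hki).mono_left (hle k))]
    exact bot_le

theorem glueFun_symm_glueFun (hb : Pairwise (Disjoint on b)) (hφ : ∀ i, φ i (a i) = b i)
    (hsa : Finset.univ.sup a = ⊤) (x : B) :
    glueFun (fun i => (φ i).symm) b (glueFun φ a x) = x := by
  change Finset.univ.sup (fun i => (φ i).symm (glueFun φ a x ⊓ b i)) = x
  simp only [glueFun_inf hb hφ, OrderIso.symm_apply_apply]
  rw [← Finset.sup_inf_distrib_left, hsa, inf_top_eq]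

def glueOrderIso (ha : Pairwise (Disjoint on a)) (hb : Pairwise (Disjoint on b))
    (hsa : Finset.univ.sup a = ⊤) (hsb : Finset.univ.sup b = ⊤) (hφ : ∀ i, φ i (a i) = b i) :
    B ≃o B :=
  Equiv.toOrderIso
    { toFun := glueFun φ a
      invFun := glueFun (fun i => (φ i).symm) b
      left_inv := glueFun_symm_glueFun hb hφ hsa
      right_inv := glueFun_symm_glueFun ha (fun i => (φ i).symm_apply_eq.2 (hφ i).symm) hsb }
    glueFun_monotone glueFun_monotone

theorem IsBAMeasure.map_glueFun {μ : B → S} (hμ : IsBAMeasure μ) (ha : Pairwise (Disjoint on a))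
    (hb : Pairwise (Disjoint on b)) (hsa : Finset.univ.sup a = ⊤) (hφ : ∀ i, φ i (a i) = b i)
    (hφμ : ∀ i, PreservesMeas μ (φ i)) (x : B) : μ (glueFun φ a x) = μ x := by
  have hpieces : ∀ i, φ i (x ⊓ a i) ≤ b i := fun i => hφ i ▸ (φ i).monotone inf_le_right
  calc μ (glueFun φ a x) = ∑ i, μ (φ i (x ⊓ a i)) :=
        hμ.map_finset_sup _ (Set.PairwiseDisjoint.mono_on (hb.set_pairwise _) fun i _ => hpieces i)
    _ = ∑ i, μ (x ⊓ a i) := Finset.sum_congr rfl fun i _ => hφμ i _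
    _ = μ (Finset.univ.sup fun i => x ⊓ a i) := (hμ.map_finset_sup _
        (Set.PairwiseDisjoint.mono_on (ha.set_pairwise _) fun i _ => inf_le_right)).symm
    _ = μ x := by rw [← Finset.sup_inf_distrib_left, hsa, inf_top_eq]

theorem exists_preservesMeas_glue {μ : B → S} (hμ : IsBAMeasure μ)
    (ha : Pairwise (Disjoint on a)) (hb : Pairwise (Disjoint on b))
    (hsa : Finset.univ.sup a = ⊤) (hsb : Finset.univ.sup b = ⊤)
    (h : ∀ i, ∃ φ : B ≃o B, PreservesMeas μ φ ∧ φ (a i) = b i) :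
    ∃ Φ : B ≃o B, PreservesMeas μ Φ ∧ ∀ i, Φ (a i) = b i := by
  choose φ hφμ hφ using h
  exact ⟨glueOrderIso ha hb hsa hsb hφ, hμ.map_glueFun ha hb hsa hφ hφμ,
    fun i => (glueFun_eq_of_le ha le_rfl).trans (hφ i)⟩

end Glue

theorem pairwise_disjoint_sdiff_compl {a j : B} (h : a ≤ j) :
    Pairwise (Disjoint on ![a, j \ a, jᶜ]) := by
  have h₁ : Disjoint a (j \ a) := disjoint_sdiff_self_right
  have h₂ : Disjoint a jᶜ := disjoint_compl_right.mono_left h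
  have h₃ : Disjoint (j \ a) jᶜ := disjoint_compl_right.mono_left sdiff_le
  intro i k hik
  fin_cases i <;> fin_cases k <;>
    first | exact absurd rfl hik | simp [onFun, h₁, h₂, h₃, h₁.symm, h₂.symm, h₃.symm]

theorem univ_sup_sdiff_compl {a j : B} (h : a ≤ j) :
    Finset.univ.sup ![a, j \ a, jᶜ] = ⊤ := by
  simp [Fin.univ_succ, ← sup_assoc, sup_sdiff_cancel_right h]

section Homogeneous

variable {μ : B → S}

theorem MeasHomogeneous.exists_map_of_le (hμ : IsBAMeasure μ) (hhom : MeasHomogeneous μ)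
    {a b j : B} (haj : a ≤ j) (hbj : b ≤ j) (ha : a ≠ ⊥) (hja : a ≠ j) (hb : b ≠ ⊥)
    (hjb : b ≠ j) (hab : μ a = μ b) (hjab : μ (j \ a) = μ (j \ b)) :
    ∃ φ : B ≃o B, PreservesMeas μ φ ∧ φ a = b :=
  hhom a b ⟨ha, ne_top_of_lt (haj.lt_of_ne hja)⟩ ⟨hb, ne_top_of_lt (hbj.lt_of_ne hjb)⟩ hab
    (by rw [hμ.map_compl_of_le haj, hμ.map_compl_of_le hbj, hjab])

theorem MeasHomogeneous.measHomogeneousOn (hμ : IsBAMeasure μ) (hhom : MeasHomogeneous μ)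
    (j : B) : MeasHomogeneousOn μ j := by
  intro a b haj hbj ha hja hb hjb hab hjab
  have sdiff_ne_bot {c : B} (hc : c ≤ j) (hcj : c ≠ j) : j \ c ≠ ⊥ :=
    fun h => hcj (hc.antisymm (sdiff_eq_bot_iff.1 h))
  have sdiff_ne {c : B} (hc : c ≤ j) (hc₀ : c ≠ ⊥) : j \ c ≠ j :=
    fun h => hc₀ (disjoint_self.1 ((sdiff_eq_left.1 h).mono_left hc))
  have sdiff_sdiff {c : B} (hc : c ≤ j) : j \ (j \ c) = c := by
    rw [sdiff_sdiff_right_self, inf_eq_right.2 hc]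
  have hpiece₀ := hhom.exists_map_of_le hμ haj hbj ha hja hb hjb hab hjab
  have hpiece₁ := hhom.exists_map_of_le hμ sdiff_le sdiff_le (sdiff_ne_bot haj hja)
    (sdiff_ne haj ha) (sdiff_ne_bot hbj hjb) (sdiff_ne hbj hb) hjab
    (by rwa [sdiff_sdiff haj, sdiff_sdiff hbj])
  obtain ⟨Φ, hΦ, hΦab⟩ := exists_preservesMeas_glue (b := ![b, j \ b, jᶜ]) hμ
    (pairwise_disjoint_sdiff_compl haj) (pairwise_disjoint_sdiff_compl hbj)
    (univ_sup_sdiff_compl haj) (univ_sup_sdiff_compl hbj) fun i => by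
      fin_cases i
      exacts [hpiece₀, hpiece₁, ⟨OrderIso.refl B, fun _ => rfl, rfl⟩]
  have hΦa : Φ a = b := hΦab 0
  have hΦja : Φ (j \ a) = j \ b := hΦab 1
  refine ⟨Φ, fun x _ => hΦ x, ?_, hΦa⟩
  calc Φ j = Φ (a ⊔ j \ a) := by rw [sup_sdiff_cancel_right haj]
    _ = j := by rw [map_sup, hΦa, hΦja, sup_sdiff_cancel_right hbj]

end Homogeneous

section Spectrum

variable {μ : B → S} {j x y z : B}

theorem IsPartition3On.meas_add_add (hμ : IsBAMeasure μ) (h : IsPartition3On j x y z) :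
    μ x + μ y + μ z = μ j := by
  obtain ⟨-, -, -, hxy, hxz, hyz, hj⟩ := h
  rw [← hj, hμ.2 _ _ (disjoint_sup_left.2 ⟨hxz, hyz⟩), hμ.2 _ _ hxy]

theorem IsPartition3On.isPartition3_sup_compl (h : IsPartition3On j x y z) :
    IsPartition3 x y (z ⊔ jᶜ) := by
  obtain ⟨hx, hy, hz, hxy, hxz, hyz, hj⟩ := h
  have hle : x ⊔ y ⊔ z ≤ j := hj.le
  refine ⟨hx, hy, fun h => hz (le_bot_iff.1 (h ▸ le_sup_left)), hxy,
    disjoint_sup_right.2 ⟨hxz, disjoint_compl_right.mono_left ?_⟩,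
    disjoint_sup_right.2 ⟨hyz, disjoint_compl_right.mono_left ?_⟩, ?_⟩
  · exact le_sup_left.trans (le_sup_left.trans hle)
  · exact le_sup_right.trans (le_sup_left.trans hle)
  · rw [← sup_assoc, hj, sup_compl_eq_top]

theorem IsPartition3On.isPartition3_sup (h : IsPartition3On j x y z) (hj : j ≠ ⊤) :
    IsPartition3 (x ⊔ y) z jᶜ := by
  obtain ⟨hx, -, hz, -, hxz, hyz, hsup⟩ := h
  refine ⟨fun h => hx (le_bot_iff.1 (h ▸ le_sup_left)), hz, mt compl_eq_bot.1 hj,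
    disjoint_sup_left.2 ⟨hxz, hyz⟩, disjoint_compl_right.mono_left (hsup ▸ le_sup_left),
    disjoint_compl_right.mono_left (hsup ▸ le_sup_right), by rw [hsup, sup_compl_eq_top]⟩

theorem trinarySpectrumOn_subset (hμ : IsBAMeasure μ) (hj : j ≠ ⊤) :
    TrinarySpectrumOn μ j ⊆ {t : S × S × S |
      t.1 + t.2.1 + t.2.2 = μ j ∧
      (t.1, t.2.1, t.2.2 + μ jᶜ) ∈ TrinarySpectrum μ ∧
      (t.1 + t.2.1, t.2.2, μ jᶜ) ∈ TrinarySpectrum μ} := by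
  rintro _ ⟨x, y, z, h, rfl⟩
  have ⟨_, _, _, hxy, _, _, hsup⟩ := h
  have hz : Disjoint z jᶜ := disjoint_compl_right.mono_left (hsup ▸ le_sup_right)
  exact ⟨h.meas_add_add hμ, ⟨x, y, z ⊔ jᶜ, h.isPartition3_sup_compl, by rw [hμ.2 _ _ hz]⟩,
    ⟨x ⊔ y, z, jᶜ, h.isPartition3_sup hj, by rw [hμ.2 _ _ hxy]⟩⟩

/-- The four elements property `MeasHas4EP`, for proper `d`. -/
theorem MeasHomogeneous.exists_split (hμ : IsBAMeasure μ) (hhom : MeasHomogeneous μ)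
    {a b c d : B} (habc : IsPartition3 a b c) (hd : IsProperElem d) (hab : μ a + μ b = μ d)
    (hc : μ c = μ dᶜ) :
    ∃ p q : B, p ≠ ⊥ ∧ q ≠ ⊥ ∧ Disjoint p q ∧ p ⊔ q = d ∧ μ p = μ a ∧ μ q = μ b := by
  obtain ⟨ha, hb, hc₀, hab', hac, hbc, habc⟩ := habc
  have hcompl : (a ⊔ b)ᶜ = c :=
    IsCompl.compl_eq ⟨disjoint_sup_left.2 ⟨hac, hbc⟩, codisjoint_iff.2 habc⟩
  have hne_top : a ⊔ b ≠ ⊤ := fun h => hc₀ (by rw [← hcompl, h, compl_top])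
  obtain ⟨φ, hφ, hφab⟩ := hhom (a ⊔ b) d ⟨fun h => ha (le_bot_iff.1 (h ▸ le_sup_left)), hne_top⟩
    hd (by rw [hμ.2 _ _ hab', hab]) (by rw [hcompl, hc])
  refine ⟨φ a, φ b, ?_, ?_, ?_, by rw [← map_sup, hφab], hφ a, hφ b⟩
  exacts [mt (map_eq_bot_iff φ).1 ha, mt (map_eq_bot_iff φ).1 hb,
    (disjoint_map_orderIso_iff φ).2 hab']

theorem MeasHomogeneous.subset_trinarySpectrumOn (hμ : IsBAMeasure μ) (hhom : MeasHomogeneous μ)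
    (hj : IsProperElem j) :
    {t : S × S × S |
      t.1 + t.2.1 + t.2.2 = μ j ∧
      (t.1, t.2.1, t.2.2 + μ jᶜ) ∈ TrinarySpectrum μ ∧
      (t.1 + t.2.1, t.2.2, μ jᶜ) ∈ TrinarySpectrum μ} ⊆ TrinarySpectrumOn μ j := by
  rintro ⟨t₁, t₂, t₃⟩ ⟨hsum, ⟨x, y, z, hxyz, hx⟩, ⟨u, v, w, huvw, hu⟩⟩
  simp only [Prod.mk.injEq] at hx hu
  obtain ⟨rfl, rfl, hz⟩ := hx
  obtain ⟨hu, rfl, hw⟩ := hu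
  obtain ⟨p, q, hp, hq, hpq, hpqj, hpu, hqv⟩ :=
    hhom.exists_split hμ huvw hj (by rw [← hu, hsum]) hw.symm
  have hpc : pᶜ = q ⊔ jᶜ := by
    rw [← hpqj, compl_sup, sup_inf_left, sup_compl_eq_top, inf_top_eq,
      sup_eq_right.2 hpq.le_compl_left]
  obtain ⟨p', q', hp', hq', hpq', hpq'p, hp'x, hq'y⟩ :=
    hhom.exists_split hμ hxyz ⟨hp, fun h => hq (top_disjoint.1 (h ▸ hpq))⟩ (by rw [hpu, hu])
      (by rw [hpc, hμ.2 _ _ (disjoint_compl_right.mono_left (hpqj ▸ le_sup_right)), hqv, hz])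
  refine ⟨p', q', q, ⟨hp', hq', hq, hpq', hpq.mono_left (hpq'p ▸ le_sup_left),
    hpq.mono_left (hpq'p ▸ le_sup_right), by rw [hpq'p, hpqj]⟩, by rw [hp'x, hq'y, hqv]⟩

end Spectrum

theorem restriction_homogeneous_and_spectrum_general
    (μ : B → S) (hμ : IsBAMeasure μ) (hhom : MeasHomogeneous μ)
    (j : B) (hj : IsProperElem j) :
    MeasHomogeneousOn μ j ∧
    TrinarySpectrumOn μ j = {t : S × S × S |
      t.1 + t.2.1 + t.2.2 = μ j ∧
      (t.1, t.2.1, t.2.2 + μ jᶜ) ∈ TrinarySpectrum μ ∧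
      (t.1 + t.2.1, t.2.2, μ jᶜ) ∈ TrinarySpectrum μ} :=
  ⟨hhom.measHomogeneousOn hμ j, (trinarySpectrumOn_subset hμ hj.2).antisymm
    (hhom.subset_trinarySpectrumOn hμ hj)⟩

/-- the restriction of a homogeneous measure to a proper element
is homogeneous, and its trinary spectrum is as described. -/
theorem restriction_homogeneous_and_spectrum [Countable B] [Nontrivial B]
    (hatomless : ∀ a : B, a ≠ ⊥ → ∃ b : B, b ≠ ⊥ ∧ b < a)
    (μ : B → S) (hμ : IsBAMeasure μ) (hhom : MeasHomogeneous μ)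
    (j : B) (hj : IsProperElem j) :
    MeasHomogeneousOn μ j ∧
    TrinarySpectrumOn μ j = {t : S × S × S |
      t.1 + t.2.1 + t.2.2 = μ j ∧
      (t.1, t.2.1, t.2.2 + μ jᶜ) ∈ TrinarySpectrum μ ∧
      (t.1 + t.2.1, t.2.2, μ jᶜ) ∈ TrinarySpectrum μ} :=
  restriction_homogeneous_and_spectrum_general μ hμ hhom j hj
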